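/- arXiv:1504.07778 — 5 statements merged into one kernel-verified Lean document; each statement's English description precedes it below -/
import Mathlib

section
/- Let (Y,d) be a metric space and K(t) ⊆ Y compact for each t ∈ [0,T]. Suppose Y is locally compact and for all s,t ∈ [0,T], K(t) ⊆ {y : dist(y, K(s)) ≤ |s-t|}. Then the union ⋃_{t ∈ [0,T]} K(t) is compact. -/
/-!
The hypothesis makes `t ↦ K t` upper hemicontinuous: an open `V ⊇ K t` contains some
`cthickening δ (K t)` by compactness, hence every `K s` with `|s - t| < δ`. A compact-valued upper
hemicontinuous map sends a compact set to a compact union: cover each `K t` by finitely many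
members of an open cover, and cover `[0, T]` by finitely many of the neighbourhoods of `t` on which
`K` stays inside that finite union.
-/

open Set Metric Filter

theorem IsCompact.biUnion_of_upperHemicontinuousOn {X Y : Type*} [TopologicalSpace X]
    [TopologicalSpace Y] {S : Set X} {K : X → Set Y} (hS : IsCompact S)
    (hK : UpperHemicontinuousOn K S) (hKc : ∀ t ∈ S, IsCompact (K t)) :
    IsCompact (⋃ t ∈ S, K t) := by
  refine isCompact_of_finite_subcover fun U hU hcover ↦ ?_
  have hfin : ∀ t ∈ S, ∃ F : Finset _, K t ⊆ ⋃ i ∈ F, U i := fun t ht ↦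
    (hKc t ht).elim_finite_subcover U hU ((subset_biUnion_of_mem ht).trans hcover)
  choose! F hF using hfin
  obtain ⟨G, -, hG⟩ := hS.elim_nhdsWithin_subcover (fun t ↦ {s | K s ⊆ ⋃ i ∈ F t, U i})
    fun t ht ↦ hK.forall_isOpen t ht _ (isOpen_biUnion fun i _ ↦ hU i) (hF t ht)
  classical
  refine ⟨G.biUnion F, iUnion₂_subset fun s hs ↦ ?_⟩
  obtain ⟨t, htG, hst⟩ := mem_iUnion₂.1 (hG hs)
  exact hst.trans <| biUnion_subset_biUnion_left fun i hi ↦ Finset.mem_biUnion.2 ⟨t, htG, hi⟩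

theorem upperHemicontinuousOn_of_subset_cthickening_dist {X Y : Type*} [PseudoMetricSpace X]
    [PseudoMetricSpace Y] {S : Set X} {K : X → Set Y} (hKc : ∀ t ∈ S, IsCompact (K t))
    (hK : ∀ s ∈ S, ∀ t ∈ S, K t ⊆ cthickening (dist s t) (K s)) :
    UpperHemicontinuousOn K S := by
  refine .of_forall_isOpen fun t ht V hV hKV ↦ ?_
  obtain ⟨δ, hδ, hδV⟩ := (hKc t ht).exists_cthickening_subset_open hV hKV
  filter_upwards [inter_mem_nhdsWithin S (ball_mem_nhds t hδ)] with s ⟨hsS, hst⟩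
  calc K s ⊆ cthickening (dist t s) (K t) := hK t ht s hsS
    _ ⊆ cthickening δ (K t) := cthickening_mono (mem_ball'.1 hst).le _
    _ ⊆ V := hδV

theorem stmt2_general {Y : Type*} [MetricSpace Y] (T : ℝ)
    (K : ℝ → Set Y)
    (hK : ∀ t ∈ Icc (0:ℝ) T, IsCompact (K t))
    (hKsub : ∀ s ∈ Icc (0:ℝ) T, ∀ t ∈ Icc (0:ℝ) T,
      K t ⊆ Metric.cthickening |s - t| (K s)) :
    IsCompact (⋃ t ∈ Icc (0:ℝ) T, K t) :=
  isCompact_Icc.biUnion_of_upperHemicontinuousOn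
    (upperHemicontinuousOn_of_subset_cthickening_dist hK (by simpa [Real.dist_eq] using hKsub)) hK

/-- If `Y` is a locally compact metric space, each `K(t)` is compact for
`t ∈ [0,T]`, and `K(t) ⊆ K(s)_{|s−t|}` (closed `|s−t|`-neighborhood), then
`⋃_{t ∈ [0,T]} K(t)` is compact. -/
theorem stmt2 {Y : Type*} [MetricSpace Y] [LocallyCompactSpace Y] (T : ℝ)
    (K : ℝ → Set Y)
    (hK : ∀ t ∈ Icc (0:ℝ) T, IsCompact (K t))
    (hKsub : ∀ s ∈ Icc (0:ℝ) T, ∀ t ∈ Icc (0:ℝ) T,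
      K t ⊆ Metric.cthickening |s - t| (K s)) :
    IsCompact (⋃ t ∈ Icc (0:ℝ) T, K t) :=
  stmt2_general T K hK hKsub
end

section
/- If η : [0,b_η] → 𝓜 is a 1-Lipschitz curve with respect to d_𝓜, and s,t ∈ [0,b_η] with |s−t| < ε, then supp(η(t)) ⊆ (supp(η(s)))_ε. Consequently ⋃_{s ∈ [0,b_η]} supp(η(s)) is compact. -/
open MeasureTheory Set Filter
open scoped ENNReal Classical

variable {X : Type*} [MetricSpace X] [MeasurableSpace X]

/-- Total mass of a measure, as a real number. -/
noncomputable def mass (ν : Measure X) : ℝ := (ν Set.univ).toReal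

/-- The support of a measure. -/
def msupp (ν : Measure X) : Set X := {x : X | ∀ ε : ℝ, 0 < ε → 0 < ν (Metric.ball x ε)}

/-- The set `𝓜` of measures dominated by `μ` with compact support. -/
def MM (μ : Measure X) : Set (Measure X) := {ν | ν ≤ μ ∧ IsCompact (msupp ν)}

/-- Gauge function `h` used in the definition of the mass transport metric. -/
def IsGauge (h : ℝ → ℝ) : Prop :=
  StrictMonoOn h (Set.Ici 0) ∧ ContinuousOn h (Set.Ici 0) ∧ h 0 = 0 ∧
  Tendsto (fun ε => h ε / ε) (nhdsWithin 0 (Set.Ioi 0)) (nhds 0) ∧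
  (∀ a b : ℝ, 0 ≤ a → 0 ≤ b → h a + h b ≤ h (a + b)) ∧
  Tendsto h atTop atTop

/-- `Γ_{ε,δ}(ν,η) ≠ ∅`: existence of a countable mass-transport decomposition. -/
def GammaDecomp (μ : Measure X) (ε δ : ℝ) (ν η : Measure X) : Prop :=
  ∃ νi ηi : ℕ → Measure X,
    (∀ i, νi i ∈ MM μ) ∧ (∀ i, ηi i ∈ MM μ) ∧
    ν = Measure.sum νi ∧ η = Measure.sum ηi ∧
    (∃ S : ℝ, HasSum (fun i => |mass (νi i) - mass (ηi i)|) S ∧ S ≤ δ) ∧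
    (∀ i, Metric.diam (msupp (νi i) ∪ msupp (ηi i)) ≤ ε)

/-- The mass transport metric `d_𝓜`. -/
noncomputable def dM (h : ℝ → ℝ) (μ : Measure X) (ν η : Measure X) : ℝ :=
  sInf {ε : ℝ | 0 < ε ∧ GammaDecomp μ ε (h ε) ν η}

/-- A rectifiable curve in `𝓜` subparametrized by arc-length: a `1`-Lipschitz map
`[0,b] → (𝓜, d_𝓜)`. -/
def IsCurveM (h : ℝ → ℝ) (μ : Measure X) (b : ℝ) (γ : ℝ → Measure X) : Prop :=
  0 ≤ b ∧ (∀ t ∈ Icc (0:ℝ) b, γ t ∈ MM μ) ∧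
  ∀ s ∈ Icc (0:ℝ) b, ∀ t ∈ Icc (0:ℝ) b, dM h μ (γ s) (γ t) ≤ |s - t|

/-- A rectifiable curve in `𝓧 = 𝓜 \ {0}` subparametrized by arc-length. -/
def IsCurveX (h : ℝ → ℝ) (μ : Measure X) (b : ℝ) (γ : ℝ → Measure X) : Prop :=
  IsCurveM h μ b γ ∧ ∀ t ∈ Icc (0:ℝ) b, γ t ≠ 0

/-- The mean value functional `F_f(η) = (1/‖η‖) ∫ f dη`. -/
noncomputable def FfM (f : X → ℝ) (η : Measure X) : ℝ := (∫ x, f x ∂η) / mass η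

/-- `r_F^ε(η)`. -/
noncomputable def rGradE (h : ℝ → ℝ) (μ : Measure X) (F : Measure X → ℝ) (ε : ℝ)
    (η : Measure X) : ℝ≥0∞ :=
  sSup {r : ℝ≥0∞ | ∃ (b : ℝ) (γ : ℝ → Measure X) (s : ℝ),
    IsCurveX h μ b γ ∧ γ 0 = η ∧ 0 < s ∧ s < ε ∧ s < b ∧
    r = ENNReal.ofReal (|F (γ s) - F η| / s)}

/-- The upper gradient `r_F(η) = lim_{ε→0} r_F^ε(η)`. -/
noncomputable def rGrad (h : ℝ → ℝ) (μ : Measure X) (F : Measure X → ℝ)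
    (η : Measure X) : ℝ≥0∞ :=
  ⨅ (ε : ℝ) (_ : 0 < ε), rGradE h μ F ε η

/-- Upper semicontinuous regularization along curves of `g : 𝓧 → [0,∞]`. -/
noncomputable def breveG (h : ℝ → ℝ) (μ : Measure X) (g : Measure X → ℝ≥0∞)
    (η : Measure X) : ℝ≥0∞ :=
  ⨅ (s : ℝ) (_ : 0 < s), sSup {r : ℝ≥0∞ | ∃ (b : ℝ) (γ : ℝ → Measure X) (t : ℝ),
    IsCurveX h μ b γ ∧ γ 0 = η ∧ 0 ≤ t ∧ t < s ∧ t ≤ b ∧ r = g (γ t)}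

/-- `sup { Σᵢ G(ηᵢ)^p ‖ηᵢ‖ }` over finite disjointly supported families in `𝓧`. -/
noncomputable def LpPow (μ : Measure X) (p : ℝ) (G : Measure X → ℝ≥0∞) : ℝ≥0∞ :=
  sSup {r : ℝ≥0∞ | ∃ (k : ℕ) (η : Fin k → Measure X),
    (∀ i, η i ∈ MM μ ∧ η i ≠ 0) ∧
    (∀ i j, i ≠ j → Disjoint (msupp (η i)) (msupp (η j))) ∧
    r = ∑ i, (G (η i)) ^ p * (η i) Set.univ}

/-- The `𝓛^p(𝓧)` norm of `F : 𝓧 → ℝ`. -/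
noncomputable def LpNorm (μ : Measure X) (p : ℝ) (F : Measure X → ℝ) : ℝ≥0∞ :=
  (LpPow μ p (fun η => ENNReal.ofReal |F η|)) ^ (1 / p)

/-- The `𝓛^p(𝓧)` norm for an extended exponent `p ∈ [1,∞]`. -/
noncomputable def LpNormE (μ : Measure X) (p : ℝ≥0∞) (F : Measure X → ℝ) : ℝ≥0∞ :=
  if p = ∞ then ⨆ (η : Measure X) (_ : η ∈ MM μ ∧ η ≠ 0), ENNReal.ofReal |F η|
  else LpNorm μ p.toReal F

/-!
A decomposition witnessing `d_𝓜(ν, η) < ρ` moves each piece of `ν` by at most `ρ` and changes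
the masses by at most `h ρ` in total, so `η` puts at most `ν Aᶜ + h ρ` outside the
`ρ`-thickening of any set `A`. Chaining this along `n` equal steps from `s` to `t` bounds the mass
of `γ t` outside the `ε`-thickening of `supp γ(s)` by `n h(ε/n) = ε · h(ε/n)/(ε/n)`, which tends
to `0`. Compactness of the union then holds because `s ↦ supp γ(s)` is an upper hemicontinuous
map with compact values on a compact interval.
-/

open scoped Topology

theorem isCompact_biUnion_of_eventually_subset {T Y : Type*} [TopologicalSpace T]
    [TopologicalSpace Y] {I : Set T} (hI : IsCompact I) {K : T → Set Y}
    (hK : ∀ s ∈ I, IsCompact (K s))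
    (hKI : ∀ s ∈ I, ∀ V ∈ 𝓝ˢ (K s), ∀ᶠ t in 𝓝[I] s, K t ⊆ V) :
    IsCompact (⋃ s ∈ I, K s) := by
  refine isCompact_iff_ultrafilter_le_nhds'.2 fun f hf => ?_
  have hσ : ∀ x ∈ ⋃ s ∈ I, K s, ∃ s ∈ I, x ∈ K s := fun x hx => by simpa using hx
  have : Nonempty T := let ⟨s, _⟩ := hσ _ (f.nonempty_of_mem hf).some_mem; ⟨s⟩
  choose! σ hσI hσK using hσ
  have hσf : σ ⁻¹' I ∈ f := Filter.mem_of_superset hf hσI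
  obtain ⟨s, hsI, hs⟩ := hI.ultrafilter_le_nhds' (f.map σ) hσf
  have hfK : ↑f ≤ 𝓝ˢ (K s) := fun V hV => by
    have hmap : Tendsto σ f (𝓝[I] s) := tendsto_nhdsWithin_iff.2 ⟨hs, hσf⟩
    filter_upwards [hmap (hKI s hsI V hV), hf] with x hxV hx using hxV (hσK x hx)
  by_contra! hnot
  have hdisj : Disjoint (𝓝ˢ (K s)) f :=
    (hK s hsI).disjoint_nhdsSet_left.2 fun x hx =>
      (Ultrafilter.disjoint_iff_not_le.2 (hnot x (mem_biUnion hsI hx))).symm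
  exact f.neBot.ne (disjoint_self.1 (hdisj.mono_left hfK))

theorem msupp_eq_support (ν : Measure X) : msupp ν = ν.support := by
  ext x
  exact (Metric.nhds_basis_ball.mem_measureSupport).symm

theorem measure_compl_msupp [TopologicalSpace.SeparableSpace X] (ν : Measure X) :
    ν (msupp ν)ᶜ = 0 := by
  rw [msupp_eq_support]
  exact Measure.measure_compl_support

@[simp]
theorem msupp_zero : msupp (0 : Measure X) = ∅ := by
  simp [msupp_eq_support]

theorem GammaDecomp.of_mem_MM {μ ν η : Measure X} (hν : ν ∈ MM μ) (hη : η ∈ MM μ) {ε δ : ℝ}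
    (hdiam : Metric.diam (msupp ν ∪ msupp η) ≤ ε) (hδ : |mass ν - mass η| ≤ δ) :
    GammaDecomp μ ε δ ν η := by
  have hsum : ∀ ξ : Measure X, ξ = Measure.sum (Pi.single 0 ξ) := fun ξ => by
    ext s hs
    rw [Measure.sum_apply _ hs, tsum_eq_single 0 fun i hi => by simp [hi]]
    simp
  have hMM : ∀ ξ ∈ MM μ, ∀ i, Pi.single (M := fun _ => Measure X) 0 ξ i ∈ MM μ := fun ξ hξ i => by
    rcases eq_or_ne i 0 with rfl | hi
    · simpa using hξ
    · simpa [hi, MM] using Measure.zero_le μ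
  refine ⟨Pi.single 0 ν, Pi.single 0 η, hMM ν hν, hMM η hη, hsum ν, hsum η,
    ⟨|mass ν - mass η|, ?_, hδ⟩, fun i => ?_⟩
  · convert hasSum_pi_single 0 |mass ν - mass η| using 2 with i
    rcases eq_or_ne i 0 with rfl | hi
    · simp
    · simp [hi, mass]
  · rcases eq_or_ne i 0 with rfl | hi
    · simpa using hdiam
    · simpa [hi] using (Metric.diam_nonneg.trans hdiam)

theorem exists_gammaDecomp {h : ℝ → ℝ} (hh : Tendsto h atTop atTop) {μ ν η : Measure X}
    (hν : ν ∈ MM μ) (hη : η ∈ MM μ) : ∃ ε, 0 < ε ∧ GammaDecomp μ ε (h ε) ν η := by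
  obtain ⟨ε, hε0, hεdiam, hεh⟩ := ((eventually_gt_atTop 0).and
    ((eventually_ge_atTop (Metric.diam (msupp ν ∪ msupp η))).and
      (hh.eventually_ge_atTop |mass ν - mass η|))).exists
  exact ⟨ε, hε0, .of_mem_MM hν hη hεdiam hεh⟩

section MassTransport

variable [TopologicalSpace.SeparableSpace X] {μ ν η : Measure X} [IsFiniteMeasureOnCompacts μ]

theorem measure_univ_ne_top_of_mem_MM (hν : ν ∈ MM μ) : ν univ ≠ ⊤ := by
  refine ne_top_of_le_ne_top (hν.2.measure_lt_top (μ := μ)).ne ?_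
  calc ν univ ≤ ν (msupp ν) + ν (msupp ν)ᶜ := measure_univ_le_add_compl _
    _ ≤ μ (msupp ν) := by rw [measure_compl_msupp, add_zero]; exact hν.1 _

theorem ofReal_mass_of_mem_MM (hν : ν ∈ MM μ) : ENNReal.ofReal (mass ν) = ν univ :=
  ENNReal.ofReal_toReal (measure_univ_ne_top_of_mem_MM hν)

/-- Either `ν` does not charge `A`, or some point of `supp ν` in `A` is within `ρ` of all of
`supp η`. -/
theorem measure_compl_cthickening_le_of_diam_le (hν : ν ∈ MM μ) (hη : η ∈ MM μ) {ρ : ℝ}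
    (hdiam : Metric.diam (msupp ν ∪ msupp η) ≤ ρ) (A : Set X) :
    η (Metric.cthickening ρ A)ᶜ ≤ ν Aᶜ + ENNReal.ofReal |mass ν - mass η| := by
  rcases (msupp ν ∩ A).eq_empty_or_nonempty with hdisj | ⟨z, hzν, hzA⟩
  · have hνA : ν A = 0 := measure_mono_null (fun x hx hxν => hdisj.subset ⟨hxν, hx⟩)
      (measure_compl_msupp ν)
    calc η (Metric.cthickening ρ A)ᶜ ≤ ENNReal.ofReal (mass η) := by
          rw [ofReal_mass_of_mem_MM hη]; exact measure_mono (subset_univ _)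
      _ ≤ ENNReal.ofReal (mass ν + |mass ν - mass η|) :=
          ENNReal.ofReal_le_ofReal (by linarith [neg_abs_le (mass ν - mass η)])
      _ = ν univ + ENNReal.ofReal |mass ν - mass η| := by
          rw [ENNReal.ofReal_add (p := mass ν) ENNReal.toReal_nonneg (abs_nonneg _),
            ofReal_mass_of_mem_MM hν]
      _ ≤ ν Aᶜ + ENNReal.ofReal |mass ν - mass η| := by
          grw [measure_univ_le_add_compl A, hνA, zero_add]
  · have hsub : msupp η ⊆ Metric.cthickening ρ A := fun y hy =>
      Metric.mem_cthickening_of_dist_le y z ρ A hzA <|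
        (Metric.dist_le_diam_of_mem (hν.2.union hη.2).isBounded (Or.inr hy) (Or.inl hzν)).trans
          hdiam
    calc η (Metric.cthickening ρ A)ᶜ ≤ η (msupp η)ᶜ := measure_mono (compl_subset_compl.2 hsub)
      _ = 0 := measure_compl_msupp η
      _ ≤ _ := zero_le

theorem GammaDecomp.measure_compl_cthickening_le [OpensMeasurableSpace X] {ρ δ : ℝ}
    (hG : GammaDecomp μ ρ δ ν η) (A : Set X) :
    η (Metric.cthickening ρ A)ᶜ ≤ ν Aᶜ + ENNReal.ofReal δ := by
  obtain ⟨νi, ηi, hνi, hηi, rfl, rfl, ⟨S, hS, hSδ⟩, hdiam⟩ := hG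
  calc Measure.sum ηi (Metric.cthickening ρ A)ᶜ = ∑' i, ηi i (Metric.cthickening ρ A)ᶜ :=
        Measure.sum_apply _ Metric.isClosed_cthickening.measurableSet.compl
    _ ≤ ∑' i, (νi i Aᶜ + ENNReal.ofReal |mass (νi i) - mass (ηi i)|) := ENNReal.tsum_le_tsum
        fun i => measure_compl_cthickening_le_of_diam_le (hνi i) (hηi i) (hdiam i) A
    _ = ∑' i, νi i Aᶜ + ENNReal.ofReal S := by
        rw [ENNReal.tsum_add, ← hS.tsum_eq,
          ENNReal.ofReal_tsum_of_nonneg (fun i => abs_nonneg _) hS.summable]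
    _ ≤ Measure.sum νi Aᶜ + ENNReal.ofReal δ := by
        gcongr
        exact Measure.le_sum_apply _ _

theorem measure_compl_cthickening_le_of_dM_lt [OpensMeasurableSpace X]
    {h : ℝ → ℝ} (hh : IsGauge h) (hν : ν ∈ MM μ) (hη : η ∈ MM μ) {ρ : ℝ}
    (hd : dM h μ ν η < ρ) (A : Set X) :
    η (Metric.cthickening ρ A)ᶜ ≤ ν Aᶜ + ENNReal.ofReal (h ρ) := by
  obtain ⟨ρ', ⟨hρ'0, hG⟩, hρ'ρ⟩ := exists_lt_of_csInf_lt (exists_gammaDecomp hh.2.2.2.2.2 hν hη) hd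
  calc η (Metric.cthickening ρ A)ᶜ ≤ η (Metric.cthickening ρ' A)ᶜ :=
        measure_mono (compl_subset_compl.2 (Metric.cthickening_mono hρ'ρ.le A))
    _ ≤ ν Aᶜ + ENNReal.ofReal (h ρ') := hG.measure_compl_cthickening_le A
    _ ≤ ν Aᶜ + ENNReal.ofReal (h ρ) := by
        grw [hh.1.monotoneOn hρ'0.le (hρ'0.trans hρ'ρ).le hρ'ρ.le]

end MassTransport

theorem measure_compl_cthickening_le_of_chain {ν : ℕ → Measure X} {ρ : ℝ} (hρ : 0 ≤ ρ)
    {δ : ℝ≥0∞} {n : ℕ}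
    (hstep : ∀ k < n, ∀ A : Set X, ν (k + 1) (Metric.cthickening ρ A)ᶜ ≤ ν k Aᶜ + δ)
    (A : Set X) : ν n (Metric.cthickening (n * ρ) A)ᶜ ≤ ν 0 Aᶜ + n * δ := by
  induction n with
  | zero =>
    simpa using measure_mono (μ := ν 0) (compl_subset_compl.2 (subset_closure (s := A)))
  | succ n ih =>
    have hsub : Metric.cthickening ρ (Metric.cthickening (n * ρ) A) ⊆
        Metric.cthickening ((n + 1 : ℕ) * ρ) A := by
      refine (Metric.cthickening_cthickening_subset hρ (by positivity) A).trans
        (Metric.cthickening_mono (by push_cast; linarith) A)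
    calc ν (n + 1) (Metric.cthickening ((n + 1 : ℕ) * ρ) A)ᶜ
        ≤ ν (n + 1) (Metric.cthickening ρ (Metric.cthickening (n * ρ) A))ᶜ :=
          measure_mono (compl_subset_compl.2 hsub)
      _ ≤ ν n (Metric.cthickening (n * ρ) A)ᶜ + δ := hstep n n.lt_succ_self _
      _ ≤ ν 0 Aᶜ + n * δ + δ := by grw [ih fun k hk => hstep k (hk.trans n.lt_succ_self)]
      _ = ν 0 Aᶜ + (n + 1 : ℕ) * δ := by push_cast; ring

theorem tendsto_nat_mul_apply_div_nat {h : ℝ → ℝ}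
    (hh : Tendsto (fun ε => h ε / ε) (𝓝[>] 0) (𝓝 0)) {ε : ℝ} (hε : 0 < ε) :
    Tendsto (fun n : ℕ => n * h (ε / n)) atTop (𝓝 0) := by
  have hdiv : Tendsto (fun n : ℕ => ε / n) atTop (𝓝[>] 0) :=
    tendsto_nhdsWithin_iff.2 ⟨tendsto_const_div_atTop_nhds_zero_nat ε,
      (eventually_gt_atTop 0).mono fun n hn => div_pos hε (by exact_mod_cast hn)⟩
  have hlim := (hh.comp hdiv).const_mul ε
  rw [mul_zero] at hlim
  refine hlim.congr' ((eventually_gt_atTop 0).mono fun n hn => ?_)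
  have hn' : (n : ℝ) ≠ 0 := by exact_mod_cast hn.ne'
  simp only [Function.comp_apply]
  field_simp

namespace IsCurveM

variable [OpensMeasurableSpace X] [TopologicalSpace.SeparableSpace X] {h : ℝ → ℝ}
  {μ : Measure X} [IsFiniteMeasureOnCompacts μ] {b : ℝ} {γ : ℝ → Measure X}

theorem measure_compl_cthickening_le (hh : IsGauge h) (hγ : IsCurveM h μ b γ) {s t ε : ℝ}
    (hs : s ∈ Icc 0 b) (ht : t ∈ Icc 0 b) (hst : |s - t| < ε) {n : ℕ} (hn : 0 < n)
    (A : Set X) :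
    γ t (Metric.cthickening ε A)ᶜ ≤ γ s Aᶜ + n * ENNReal.ofReal (h (ε / n)) := by
  have hn' : (0 : ℝ) < n := by exact_mod_cast hn
  set u : ℕ → ℝ := fun k => AffineMap.lineMap s t ((k : ℝ) / n) with hu_def
  have hu : ∀ k ≤ n, u k ∈ Icc 0 b := fun k hk =>
    (convex_Icc 0 b).segment_subset hs ht <| lineMap_mem_segment (𝕜 := ℝ) s t
      ⟨by positivity, div_le_one_of_le₀ (by exact_mod_cast hk) hn'.le⟩
  have hu_dist : ∀ k, |u k - u (k + 1)| < ε / n := fun k => by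
    rw [← Real.dist_eq, dist_lineMap_lineMap, Real.dist_eq, Real.dist_eq, ← sub_div,
      abs_div, abs_of_pos hn']
    push_cast
    rw [sub_add_cancel_left, abs_neg, abs_one, one_div_mul_eq_div]
    exact div_lt_div_of_pos_right hst hn'
  have hchain := measure_compl_cthickening_le_of_chain (ν := γ ∘ u)
    (δ := ENNReal.ofReal (h (ε / n))) (div_nonneg ((abs_nonneg _).trans hst.le) hn'.le)
    (fun k hk A => measure_compl_cthickening_le_of_dM_lt hh (hγ.2.1 _ (hu k hk.le))
      (hγ.2.1 _ (hu (k + 1) hk))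
      ((hγ.2.2 _ (hu k hk.le) _ (hu (k + 1) hk)).trans_lt (hu_dist k)) A) A
  simpa [hu_def, mul_div_cancel₀ ε hn'.ne', div_self hn'.ne'] using hchain

theorem measure_compl_cthickening_msupp_eq_zero (hh : IsGauge h) (hγ : IsCurveM h μ b γ)
    {s t ε : ℝ} (hs : s ∈ Icc 0 b) (ht : t ∈ Icc 0 b) (hst : |s - t| < ε) :
    γ t (Metric.cthickening ε (msupp (γ s)))ᶜ = 0 := by
  have hε : 0 < ε := (abs_nonneg _).trans_lt hst
  have hbound : ∀ n : ℕ, 1 ≤ n → γ t (Metric.cthickening ε (msupp (γ s)))ᶜ ≤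
      ENNReal.ofReal (n * h (ε / n)) := fun n hn => by
    rw [ENNReal.ofReal_mul n.cast_nonneg, ENNReal.ofReal_natCast]
    simpa [measure_compl_msupp] using hγ.measure_compl_cthickening_le hh hs ht hst hn (msupp (γ s))
  have hlim := ENNReal.tendsto_ofReal (tendsto_nat_mul_apply_div_nat hh.2.2.2.1 hε)
  rw [ENNReal.ofReal_zero] at hlim
  exact le_antisymm (ge_of_tendsto hlim (eventually_atTop.2 ⟨1, hbound⟩)) zero_le

theorem msupp_subset_cthickening (hh : IsGauge h) (hγ : IsCurveM h μ b γ) {s t ε : ℝ}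
    (hs : s ∈ Icc 0 b) (ht : t ∈ Icc 0 b) (hst : |s - t| < ε) :
    msupp (γ t) ⊆ Metric.cthickening ε (msupp (γ s)) := by
  rw [msupp_eq_support, ← compl_subset_compl]
  exact Measure.subset_compl_support_of_isOpen Metric.isClosed_cthickening.isOpen_compl
    (hγ.measure_compl_cthickening_msupp_eq_zero hh hs ht hst)

theorem isCompact_biUnion_msupp (hh : IsGauge h) (hγ : IsCurveM h μ b γ) :
    IsCompact (⋃ s ∈ Icc 0 b, msupp (γ s)) := by
  refine isCompact_biUnion_of_eventually_subset isCompact_Icc (fun s hs => (hγ.2.1 s hs).2)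
    fun s hs V hV => ?_
  obtain ⟨δ, hδ, hδV⟩ := (Metric.hasBasis_nhdsSet_cthickening (hγ.2.1 s hs).2).mem_iff.1 hV
  filter_upwards [self_mem_nhdsWithin, mem_nhdsWithin_of_mem_nhds (Metric.ball_mem_nhds s hδ)]
    with t ht htδ
  rw [Metric.mem_ball, Real.dist_eq, abs_sub_comm] at htδ
  exact (hγ.msupp_subset_cthickening hh hs ht htδ).trans hδV

end IsCurveM

theorem stmt6_general {X : Type*} [MetricSpace X] [MeasurableSpace X] [BorelSpace X]
    [TopologicalSpace.SeparableSpace X]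
    (μ : Measure X) [μ.Regular]
    (h : ℝ → ℝ) (hh : IsGauge h)
    (b : ℝ) (γ : ℝ → Measure X) (hγ : IsCurveM h μ b γ) :
    (∀ ε : ℝ, 0 < ε → ∀ s ∈ Icc (0:ℝ) b, ∀ t ∈ Icc (0:ℝ) b, |s - t| < ε →
      msupp (γ t) ⊆ Metric.cthickening ε (msupp (γ s))) ∧
    IsCompact (⋃ s ∈ Icc (0:ℝ) b, msupp (γ s)) :=
  ⟨fun _ _ _ hs _ ht hst => hγ.msupp_subset_cthickening hh hs ht hst,
    hγ.isCompact_biUnion_msupp hh⟩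

/-- Along a rectifiable curve subparametrized by arc-length in `𝓜`,
`supp(η(t)) ⊆ (supp(η(s)))_ε` whenever `|s−t| < ε`, and the union of the supports is
compact. -/
theorem stmt6 {X : Type*} [MetricSpace X] [MeasurableSpace X] [BorelSpace X]
    [LocallyCompactSpace X] [TopologicalSpace.SeparableSpace X]
    (μ : Measure X) [μ.Regular]
    (hμ : ∀ (x : X) (r : ℝ), 0 < r → 0 < μ (Metric.ball x r) ∧ μ (Metric.ball x r) < ⊤)
    (h : ℝ → ℝ) (hh : IsGauge h)
    (b : ℝ) (γ : ℝ → Measure X) (hγ : IsCurveM h μ b γ) :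
    (∀ ε : ℝ, 0 < ε → ∀ s ∈ Icc (0:ℝ) b, ∀ t ∈ Icc (0:ℝ) b, |s - t| < ε →
      msupp (γ t) ⊆ Metric.cthickening ε (msupp (γ s))) ∧
    IsCompact (⋃ s ∈ Icc (0:ℝ) b, msupp (γ s)) :=
  stmt6_general μ h hh b γ hγ
end

section
/- Suppose H : X → X is a homeomorphism of a locally compact separable metric measure space (X,d,μ) with μ(K) = c·μ(H⁻¹(K)) for all compact K (where c ∈ (0,1] is fixed), and d(x, H⁻¹(x)) ≤ t for all x ∈ X. If φ : X → [0,1] is measurable and (supp φ)_t is compact, then c·(φ∘H)μ and φμ both belong to 𝓜 and d_𝓜(c·(φ∘H)μ, φμ) ≤ t. -/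
open MeasureTheory Set Filter
open scoped ENNReal Classical

variable {X : Type*} [MetricSpace X] [MeasurableSpace X]

/-!
The pieces of a mass-transport decomposition are obtained by cutting `X` into countably many
measurable cells of diameter at most `ε - t` and intersecting each cell `A j` with `H⁻¹(A i)`.
Since `μ = c · H_*μ` (inner regularity extends the hypothesis from compact sets to all Borel
sets), the measure `c·(φ∘H)μ` is carried by `H` onto `φμ`, so each piece `B` of
`c·(φ∘H)μ` has the same mass as the piece `H(B)` of `φμ`; and as `H` moves points by at most `t`,
`B ∪ H(B)` has diameter at most `(ε - t) + t = ε`. Hence every `ε > t` is admissible with zero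
mass defect, and `d_𝓜 ≤ t`.
-/

open Metric

section Support

lemma isClosed_msupp (ν : Measure X) : IsClosed (msupp ν) := by
  rw [← isOpen_compl_iff, Metric.isOpen_iff]
  intro x hx
  simp only [msupp, mem_compl_iff, mem_ofPred_eq, not_forall, not_lt, nonpos_iff_eq_zero] at hx
  obtain ⟨ε, hε, hν⟩ := hx
  refine ⟨ε / 2, half_pos hε, fun y hy => ?_⟩
  simp only [msupp, mem_compl_iff, mem_ofPred_eq, not_forall, not_lt, nonpos_iff_eq_zero]
  refine ⟨ε / 2, half_pos hε, measure_mono_null (ball_subset_ball' ?_) hν⟩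
  rw [mem_ball] at hy
  linarith

lemma msupp_mono {ν ρ : Measure X} (hle : ν ≤ ρ) : msupp ν ⊆ msupp ρ :=
  fun _ hx ε hε => (hx ε hε).trans_le (hle _)

lemma restrict_mem_MM {μ ν : Measure X} (hν : ν ∈ MM μ) (s : Set X) : ν.restrict s ∈ MM μ :=
  ⟨Measure.restrict_le_self.trans hν.1,
    hν.2.of_isClosed_subset (isClosed_msupp _) (msupp_mono Measure.restrict_le_self)⟩

variable [OpensMeasurableSpace X]

lemma msupp_restrict_subset (ν : Measure X) (s : Set X) : msupp (ν.restrict s) ⊆ closure s := by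
  intro x hx
  rw [Metric.mem_closure_iff]
  intro ε hε
  have hpos := hx ε hε
  rw [Measure.restrict_apply measurableSet_ball] at hpos
  obtain ⟨y, hyx, hys⟩ := nonempty_of_measure_ne_zero hpos.ne'
  exact ⟨y, hys, by rwa [dist_comm, ← mem_ball]⟩

lemma msupp_withDensity_subset (μ : Measure X) (f : X → ℝ≥0∞) :
    msupp (μ.withDensity f) ⊆ closure {x | f x ≠ 0} := by
  intro x hx
  rw [Metric.mem_closure_iff]
  intro ε hε
  by_contra! hfar
  have hzero : ∀ y ∈ ball x ε, f y = 0 := fun y hy => by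
    by_contra hfy
    exact (hfar y hfy).not_gt (by rwa [dist_comm, ← mem_ball])
  have hpos := hx ε hε
  rw [withDensity_apply _ measurableSet_ball, setLIntegral_congr_fun measurableSet_ball hzero,
    lintegral_zero] at hpos
  exact hpos.false

lemma withDensity_mem_MM (μ : Measure X) {f : X → ℝ≥0∞} {K : Set X} (hf : ∀ x, f x ≤ 1)
    (hK : IsCompact K) (hfK : ∀ x, f x ≠ 0 → x ∈ K) : μ.withDensity f ∈ MM μ := by
  refine ⟨Measure.le_iff.2 fun s hs => ?_, hK.of_isClosed_subset (isClosed_msupp _) ?_⟩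
  · calc μ.withDensity f s = ∫⁻ x in s, f x ∂μ := withDensity_apply _ hs
      _ ≤ ∫⁻ _ in s, 1 ∂μ := lintegral_mono hf
      _ = μ s := setLIntegral_one s
  · exact (msupp_withDensity_subset μ f).trans (closure_minimal hfK hK.isClosed)

lemma diam_msupp_restrict_union_le (ν η : Measure X) {s u : Set X} {ε : ℝ} (hε : 0 ≤ ε)
    (hdist : ∀ x ∈ s ∪ u, ∀ y ∈ s ∪ u, dist x y ≤ ε) :
    diam (msupp (ν.restrict s) ∪ msupp (η.restrict u)) ≤ ε := by
  have hsub : msupp (ν.restrict s) ∪ msupp (η.restrict u) ⊆ closure (s ∪ u) :=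
    union_subset ((msupp_restrict_subset ν s).trans (closure_mono subset_union_left))
      ((msupp_restrict_subset η u).trans (closure_mono subset_union_right))
  have hbdd : Bornology.IsBounded (s ∪ u) := isBounded_iff.2 ⟨ε, hdist⟩
  calc diam (msupp (ν.restrict s) ∪ msupp (η.restrict u)) ≤ diam (closure (s ∪ u)) :=
        diam_mono hsub hbdd.closure
    _ = diam (s ∪ u) := diam_closure _
    _ ≤ ε := diam_le_of_forall_dist_le hε hdist

end Support

section Partition

open Function

variable {α β ι κ : Type*} [MeasurableSpace α] [MeasurableSpace β]

def IsMeasurablePartition (D : ι → Set α) : Prop :=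
  (∀ i, MeasurableSet (D i)) ∧ Pairwise (Disjoint on D) ∧ ⋃ i, D i = univ

namespace IsMeasurablePartition

variable {D : ι → Set α}

lemma preimage (hD : IsMeasurablePartition D) {f : β → α} (hf : Measurable f) :
    IsMeasurablePartition fun i => f ⁻¹' D i :=
  ⟨fun i => hf (hD.1 i), fun _ _ hij => (hD.2.1 hij).preimage f, by
    rw [← preimage_iUnion, hD.2.2, preimage_univ]⟩

lemma inter (hD : IsMeasurablePartition D) {E : κ → Set α} (hE : IsMeasurablePartition E) :
    IsMeasurablePartition fun p : ι × κ => D p.1 ∩ E p.2 := by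
  refine ⟨fun p => (hD.1 p.1).inter (hE.1 p.2), fun p q hpq => ?_, ?_⟩
  · rcases not_and_or.1 (Prod.ext_iff.not.1 hpq) with h | h
    · exact (hD.2.1 h).mono inter_subset_left inter_subset_left
    · exact (hE.2.1 h).mono inter_subset_right inter_subset_right
  · refine eq_univ_of_forall fun x => ?_
    obtain ⟨i, hi⟩ := mem_iUnion.1 (hD.2.2 ▸ mem_univ x)
    obtain ⟨k, hk⟩ := mem_iUnion.1 (hE.2.2 ▸ mem_univ x)
    exact mem_iUnion.2 ⟨(i, k), hi, hk⟩

lemma eq_sum_restrict (hD : IsMeasurablePartition D) (e : ℕ ≃ ι) (ρ : Measure α) :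
    ρ = Measure.sum fun n => ρ.restrict (D (e n)) := by
  rw [← Measure.restrict_iUnion (hD.2.1.comp_of_injective e.injective) fun n => hD.1 (e n),
    e.surjective.iUnion_comp D, hD.2.2, Measure.restrict_univ]

end IsMeasurablePartition

lemma exists_isMeasurablePartition_dist_le [OpensMeasurableSpace X]
    [TopologicalSpace.SeparableSpace X] {δ : ℝ} (hδ : 0 < δ) :
    ∃ A : ℕ → Set X, IsMeasurablePartition A ∧ ∀ j, ∀ x ∈ A j, ∀ y ∈ A j, dist x y ≤ δ := by
  rcases isEmpty_or_nonempty X with hX | hX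
  · exact ⟨fun _ => ∅, ⟨fun _ => .empty, fun _ _ _ => disjoint_empty _,
      eq_univ_of_forall hX.elim⟩, fun _ _ h => h.elim⟩
  set u := TopologicalSpace.denseSeq X
  refine ⟨disjointed fun j => ball (u j) (δ / 2),
    ⟨.disjointed fun _ => measurableSet_ball, disjoint_disjointed _, ?_⟩, ?_⟩
  · rw [iUnion_disjointed]
    refine eq_univ_of_forall fun x => ?_
    obtain ⟨j, hj⟩ := (TopologicalSpace.denseRange_denseSeq X).exists_dist_lt x (half_pos hδ)
    exact mem_iUnion.2 ⟨j, mem_ball.2 hj⟩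
  · intro j x hx y hy
    have hx' := mem_ball.1 (disjointed_subset _ j hx)
    have hy' := mem_ball.1 (disjointed_subset _ j hy)
    linarith [dist_triangle_right x y (u j)]

end Partition

theorem MeasurableEquiv.map_withDensity_comp {α β : Type*} [MeasurableSpace α] [MeasurableSpace β]
    (e : α ≃ᵐ β) (μ : Measure α) (g : β → ℝ≥0∞) :
    (μ.withDensity (g ∘ e)).map e = (μ.map e).withDensity g := by
  ext s hs
  rw [e.map_apply, withDensity_apply _ (e.measurable hs), withDensity_apply _ hs,
    e.restrict_map, lintegral_map_equiv]
  rfl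

theorem MeasurableEquiv.map_withDensity_const_mul_comp {α : Type*} [MeasurableSpace α]
    (e : α ≃ᵐ α) {μ : Measure α} {r : ℝ≥0∞} (hr : r ≠ ∞) (hμ : μ = r • μ.map e) (g : α → ℝ≥0∞) :
    (μ.withDensity fun x => r * g (e x)).map e = μ.withDensity g :=
  calc (μ.withDensity fun x => r * g (e x)).map e = (r • μ.withDensity (g ∘ e)).map e := by
        rw [← withDensity_smul' r _ hr]; rfl
    _ = r • (μ.map e).withDensity g := by rw [Measure.map_smul, e.map_withDensity_comp]
    _ = μ.withDensity g := by rw [← withDensity_smul_measure, ← hμ]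

theorem Measure.InnerRegular.ext_of_isCompact {α : Type*} [MeasurableSpace α]
    [TopologicalSpace α] {μ ν : Measure α}
    [μ.InnerRegular] [ν.InnerRegular] (h : ∀ K, IsCompact K → μ K = ν K) : μ = ν := by
  ext s hs
  rw [hs.measure_eq_iSup_isCompact, hs.measure_eq_iSup_isCompact]
  exact iSup_congr fun K => iSup_congr fun _ => iSup_congr fun hK => h K hK

lemma IsGauge.nonneg {h : ℝ → ℝ} (hh : IsGauge h) {ε : ℝ} (hε : 0 ≤ ε) : 0 ≤ h ε :=
  hh.2.2.1 ▸ hh.1.monotoneOn self_mem_Ici hε hε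

lemma dM_le_of_forall_gammaDecomp {h : ℝ → ℝ} {μ ν η : Measure X} {t : ℝ} (ht : 0 ≤ t)
    (hdec : ∀ ε, t < ε → GammaDecomp μ ε (h ε) ν η) : dM h μ ν η ≤ t := by
  have hsub : Ioi t ⊆ {ε : ℝ | 0 < ε ∧ GammaDecomp μ ε (h ε) ν η} :=
    fun ε hε => ⟨ht.trans_lt hε, hdec ε hε⟩
  calc dM h μ ν η ≤ sInf (Ioi t) := csInf_le_csInf ⟨0, fun _ hx => hx.1.le⟩ nonempty_Ioi hsub
    _ = t := csInf_Ioi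

theorem gammaDecomp_of_map_eq [OpensMeasurableSpace X] [TopologicalSpace.SeparableSpace X]
    {μ ν η : Measure X} (H : X ≃ᵐ X) (hνη : ν.map H = η) (hν : ν ∈ MM μ) (hη : η ∈ MM μ)
    {t ε δ : ℝ} (ht : 0 ≤ t) (hmove : ∀ x, dist x (H x) ≤ t) (htε : t < ε) (hδ : 0 ≤ δ) :
    GammaDecomp μ ε δ ν η := by
  obtain ⟨A, hA, hAdist⟩ := exists_isMeasurablePartition_dist_le (X := X) (sub_pos.2 htε)
  set B : ℕ × ℕ → Set X := fun p => H ⁻¹' A p.1 ∩ A p.2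
  have hB : IsMeasurablePartition B := (hA.preimage H.measurable).inter hA
  set e : ℕ ≃ ℕ × ℕ := (Denumerable.eqv (ℕ × ℕ)).symm
  refine ⟨fun n => ν.restrict (B (e n)), fun n => η.restrict (H.symm ⁻¹' B (e n)),
    fun n => restrict_mem_MM hν _, fun n => restrict_mem_MM hη _, hB.eq_sum_restrict e ν,
    (hB.preimage H.symm.measurable).eq_sum_restrict e η, ⟨0, ?_, hδ⟩, fun n => ?_⟩
  · convert hasSum_zero with n
    rw [mass, mass, Measure.restrict_apply_univ, Measure.restrict_apply_univ, ← hνη,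
      H.map_apply, ← preimage_comp, H.symm_comp_self, preimage_id, sub_self, abs_zero]
  · refine diam_msupp_restrict_union_le ν η (by linarith) ?_
    obtain ⟨i, j⟩ := e n
    have hcross : ∀ x ∈ B (i, j), ∀ y ∈ H.symm ⁻¹' B (i, j), dist x y ≤ ε := by
      intro x hx y hy
      have hy' : y ∈ A i := by simpa [B] using hy.1
      linarith [dist_triangle x (H x) y, hmove x, hAdist i _ hx.1 y hy']
    rintro x (hx | hx) y (hy | hy)
    · linarith [hAdist j x hx.2 y hy.2]
    · exact hcross x hx y hy
    · rw [dist_comm]; exact hcross y hy x hx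
    · linarith [hAdist i x (by simpa [B] using hx.1) y (by simpa [B] using hy.1)]

theorem stmt7_general {X : Type*} [MetricSpace X] [MeasurableSpace X] [BorelSpace X]
    [LocallyCompactSpace X] [TopologicalSpace.SeparableSpace X]
    (μ : Measure X) [μ.Regular]
    (h : ℝ → ℝ) (hh : IsGauge h)
    (H : X ≃ₜ X) (c : ℝ) (hc : c ∈ Ioc (0:ℝ) 1)
    (hpres : ∀ K : Set X, IsCompact K → μ K = ENNReal.ofReal c * μ (H ⁻¹' K))
    (t : ℝ) (ht : 0 ≤ t) (hmove : ∀ x : X, dist x (H.symm x) ≤ t)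
    (φ : X → ℝ) (hφ01 : ∀ x, φ x ∈ Icc (0:ℝ) 1)
    (hφc : IsCompact (Metric.cthickening t (tsupport φ))) :
    μ.withDensity (fun x => ENNReal.ofReal (c * φ (H x))) ∈ MM μ ∧
    μ.withDensity (fun x => ENNReal.ofReal (φ x)) ∈ MM μ ∧
    dM h μ (μ.withDensity (fun x => ENNReal.ofReal (c * φ (H x))))
      (μ.withDensity (fun x => ENNReal.ofReal (φ x))) ≤ t := by
  have : SecondCountableTopology X := UniformSpace.secondCountable_of_separable X
  have : (μ.map H).InnerRegular := Measure.InnerRegular.map H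
  obtain ⟨hc0, hc1⟩ := hc
  have hμH : μ = ENNReal.ofReal c • μ.map H := Measure.InnerRegular.ext_of_isCompact fun K hK => by
    rw [hpres K hK, Measure.smul_apply, smul_eq_mul,
      Measure.map_apply H.measurable hK.measurableSet]
  have hmove' : ∀ x, dist x (H x) ≤ t := fun x => by simpa [dist_comm] using hmove (H x)
  have hν : μ.withDensity (fun x => ENNReal.ofReal (c * φ (H x))) ∈ MM μ :=
    withDensity_mem_MM μ
      (fun x => ENNReal.ofReal_le_one.2 (mul_le_one₀ hc1 (hφ01 _).1 (hφ01 _).2)) hφc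
      fun x hx => mem_cthickening_of_dist_le x (H x) t _
        (subset_tsupport φ fun h0 => hx (by simp [h0])) (hmove' x)
  have hη : μ.withDensity (fun x => ENNReal.ofReal (φ x)) ∈ MM μ :=
    withDensity_mem_MM μ (fun x => ENNReal.ofReal_le_one.2 (hφ01 x).2) hφc
      fun x hx => self_subset_cthickening _ (subset_tsupport φ fun h0 => hx (by simp [h0]))
  have hmap : (μ.withDensity fun x => ENNReal.ofReal (c * φ (H x))).map H =
      μ.withDensity fun x => ENNReal.ofReal (φ x) := by
    have := H.toMeasurableEquiv.map_withDensity_const_mul_comp ENNReal.ofReal_ne_top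
      (by rwa [H.toMeasurableEquiv_coe]) fun x => ENNReal.ofReal (φ x)
    simp_rw [ENNReal.ofReal_mul hc0.le]
    rwa [H.toMeasurableEquiv_coe] at this
  exact ⟨hν, hη, dM_le_of_forall_gammaDecomp ht fun ε hε =>
    gammaDecomp_of_map_eq H.toMeasurableEquiv (by rwa [H.toMeasurableEquiv_coe]) hν hη ht
      (by rwa [H.toMeasurableEquiv_coe]) hε (hh.nonneg (ht.trans hε.le))⟩

/-- Mass-preserving (up to the factor `c`) homeomorphisms moving points
at most `t` move measures at most `t` in `d_𝓜`. -/
theorem stmt7 {X : Type*} [MetricSpace X] [MeasurableSpace X] [BorelSpace X]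
    [LocallyCompactSpace X] [TopologicalSpace.SeparableSpace X]
    (μ : Measure X) [μ.Regular]
    (hμ : ∀ (x : X) (r : ℝ), 0 < r → 0 < μ (Metric.ball x r) ∧ μ (Metric.ball x r) < ⊤)
    (h : ℝ → ℝ) (hh : IsGauge h)
    (H : X ≃ₜ X) (c : ℝ) (hc : c ∈ Ioc (0:ℝ) 1)
    (hpres : ∀ K : Set X, IsCompact K → μ K = ENNReal.ofReal c * μ (H ⁻¹' K))
    (t : ℝ) (ht : 0 ≤ t) (hmove : ∀ x : X, dist x (H.symm x) ≤ t)
    (φ : X → ℝ) (hφm : Measurable φ) (hφ01 : ∀ x, φ x ∈ Icc (0:ℝ) 1)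
    (hφc : IsCompact (Metric.cthickening t (tsupport φ))) :
    μ.withDensity (fun x => ENNReal.ofReal (c * φ (H x))) ∈ MM μ ∧
    μ.withDensity (fun x => ENNReal.ofReal (φ x)) ∈ MM μ ∧
    dM h μ (μ.withDensity (fun x => ENNReal.ofReal (c * φ (H x))))
      (μ.withDensity (fun x => ENNReal.ofReal (φ x))) ≤ t :=
  stmt7_general μ h hh H c hc hpres t ht hmove φ hφ01 hφc
end

section
/- For 1 ≤ p < ∞ define for F : 𝓧 → ℝ the norm ‖F‖_{𝓛^p} = sup{ (Σᵢ₌₁ᵏ |F(ηᵢ)|^p ‖ηᵢ‖)^{1/p} : ηᵢ ∈ 𝓧 with pairwise disjoint supports }. Then the set 𝓛^p(𝓧) of functions with finite norm is a vector space and ‖·‖_{𝓛^p} is a norm on it. -/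
open MeasureTheory Set Filter
open scoped ENNReal Classical

variable {X : Type*} [MetricSpace X] [MeasurableSpace X]

/-!
Every admissible family `η₁, …, η_k` turns the sum defining `LpPow` into a finite `ℓ^p`
sum with weights `‖ηᵢ‖`. Subadditivity is therefore Minkowski's inequality for weighted finite
sums, homogeneity can be pulled out of each sum, and definiteness follows by testing the norm
on the one-element family `{η}`.
-/

open Finset

theorem ENNReal.Lp_add_le_weighted {ι : Type*} (s : Finset ι) (f g w : ι → ℝ≥0∞) {p : ℝ}
    (hp : 1 ≤ p) :
    (∑ i ∈ s, (f i + g i) ^ p * w i) ^ (1 / p) ≤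
      (∑ i ∈ s, f i ^ p * w i) ^ (1 / p) + (∑ i ∈ s, g i ^ p * w i) ^ (1 / p) := by
  have hp0 : 0 < p := zero_lt_one.trans_le hp
  have weight (a : ℝ≥0∞) (i : ι) : (a * w i ^ p⁻¹) ^ p = a ^ p * w i := by
    rw [ENNReal.mul_rpow_of_nonneg _ _ hp0.le, ENNReal.rpow_inv_rpow hp0.ne']
  simpa only [← add_mul, weight] using
    ENNReal.Lp_add_le s (fun i => f i * w i ^ p⁻¹) (fun i => g i * w i ^ p⁻¹) hp

section LpPow

variable {μ : Measure X} {p : ℝ}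

theorem sum_le_LpPow (G : Measure X → ℝ≥0∞) {k : ℕ} {η : Fin k → Measure X}
    (hη : ∀ i, η i ∈ MM μ ∧ η i ≠ 0)
    (hdisj : ∀ i j, i ≠ j → Disjoint (msupp (η i)) (msupp (η j))) :
    ∑ i, G (η i) ^ p * η i univ ≤ LpPow μ p G :=
  le_sSup ⟨k, η, hη, hdisj, rfl⟩

theorem LpPow_le_iff {G : Measure X → ℝ≥0∞} {c : ℝ≥0∞} :
    LpPow μ p G ≤ c ↔ ∀ (k : ℕ) (η : Fin k → Measure X), (∀ i, η i ∈ MM μ ∧ η i ≠ 0) →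
      (∀ i j, i ≠ j → Disjoint (msupp (η i)) (msupp (η j))) →
      ∑ i, G (η i) ^ p * η i univ ≤ c := by
  simp only [LpPow, sSup_le_iff, mem_ofPred_eq, forall_exists_index, and_imp]
  exact ⟨fun h k η hη hdisj => h _ k η hη hdisj rfl,
    fun h _ k η hη hdisj hr => hr ▸ h k η hη hdisj⟩

theorem rpow_mul_le_LpPow (G : Measure X → ℝ≥0∞) {η : Measure X} (hη : η ∈ MM μ)
    (hη0 : η ≠ 0) : G η ^ p * η univ ≤ LpPow μ p G := by
  simpa using sum_le_LpPow (μ := μ) (p := p) G (η := fun _ : Fin 1 => η)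
    (fun _ => ⟨hη, hη0⟩) (fun i j hij => absurd (Subsingleton.elim i j) hij)

theorem LpPow_mono (hp : 0 ≤ p) {G H : Measure X → ℝ≥0∞} (hGH : ∀ η, G η ≤ H η) :
    LpPow μ p G ≤ LpPow μ p H :=
  LpPow_le_iff.2 fun _ η hη hdisj =>
    (sum_le_sum fun i _ => by gcongr; exact hGH (η i)).trans (sum_le_LpPow H hη hdisj)

theorem LpPow_const_mul (hp : 0 ≤ p) (c : ℝ≥0∞) (G : Measure X → ℝ≥0∞) :
    LpPow μ p (fun η => c * G η) = c ^ p * LpPow μ p G := by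
  have sum_eq (k : ℕ) (η : Fin k → Measure X) :
      ∑ i, (c * G (η i)) ^ p * η i univ = c ^ p * ∑ i, G (η i) ^ p * η i univ := by
    simp only [mul_sum, ENNReal.mul_rpow_of_nonneg _ _ hp, mul_assoc]
  apply le_antisymm
  · refine LpPow_le_iff.2 fun k η hη hdisj => ?_
    rw [sum_eq]
    exact mul_le_mul_right (sum_le_LpPow G hη hdisj) _
  · rw [LpPow, ENNReal.mul_sSup]
    refine iSup₂_le ?_
    rintro _ ⟨k, η, hη, hdisj, rfl⟩
    rw [← sum_eq]
    exact sum_le_LpPow _ hη hdisj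

theorem LpPow_add_rpow_le (hp : 1 ≤ p) (G H : Measure X → ℝ≥0∞) :
    LpPow μ p (G + H) ^ (1 / p) ≤ LpPow μ p G ^ (1 / p) + LpPow μ p H ^ (1 / p) := by
  have hp0 : 0 < p := zero_lt_one.trans_le hp
  rw [one_div, ENNReal.rpow_inv_le_iff hp0]
  refine LpPow_le_iff.2 fun k η hη hdisj => ?_
  rw [← ENNReal.rpow_inv_le_iff hp0, ← one_div]
  refine (ENNReal.Lp_add_le_weighted _ _ _ _ hp).trans ?_
  gcongr <;> exact sum_le_LpPow _ hη hdisj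

theorem LpNorm_add_le (hp : 1 ≤ p) (F G : Measure X → ℝ) :
    LpNorm μ p (fun η => F η + G η) ≤ LpNorm μ p F + LpNorm μ p G := by
  have hp0 : 0 < p := zero_lt_one.trans_le hp
  have pointwise (η : Measure X) :
      ENNReal.ofReal |F η + G η| ≤ ENNReal.ofReal |F η| + ENNReal.ofReal |G η| := by
    rw [← ENNReal.ofReal_add (abs_nonneg _) (abs_nonneg _)]
    exact ENNReal.ofReal_le_ofReal (abs_add_le _ _)
  exact (ENNReal.rpow_le_rpow (LpPow_mono hp0.le pointwise) (by positivity)).trans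
    (LpPow_add_rpow_le hp _ _)

theorem LpNorm_const_mul (hp : 0 < p) (a : ℝ) (F : Measure X → ℝ) :
    LpNorm μ p (fun η => a * F η) = ENNReal.ofReal |a| * LpNorm μ p F := by
  simp only [LpNorm, abs_mul, ENNReal.ofReal_mul (abs_nonneg a)]
  rw [LpPow_const_mul hp.le, ENNReal.mul_rpow_of_nonneg _ _ (by positivity),
    ← ENNReal.rpow_mul, mul_one_div_cancel hp.ne', ENNReal.rpow_one]

theorem eq_zero_of_LpNorm_eq_zero (hp : 0 < p) {F : Measure X → ℝ} (h : LpNorm μ p F = 0)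
    {η : Measure X} (hη : η ∈ MM μ) (hη0 : η ≠ 0) : F η = 0 := by
  have hpow : LpPow μ p (fun η => ENNReal.ofReal |F η|) = 0 :=
    (ENNReal.rpow_eq_zero_iff_of_pos (one_div_pos.2 hp)).1 h
  have hle := rpow_mul_le_LpPow (μ := μ) (p := p) (fun η => ENNReal.ofReal |F η|) hη hη0
  rw [hpow, nonpos_iff_eq_zero, mul_eq_zero, ENNReal.rpow_eq_zero_iff_of_pos hp,
    ENNReal.ofReal_eq_zero, Measure.measure_univ_eq_zero] at hle
  exact abs_nonpos_iff.1 (hle.resolve_right hη0)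

end LpPow

theorem stmt9_general {X : Type*} [MetricSpace X] [MeasurableSpace X]
    (μ : Measure X) (p : ℝ) (hp : 1 ≤ p) :
    (∀ F G : Measure X → ℝ,
      LpNorm μ p (fun η => F η + G η) ≤ LpNorm μ p F + LpNorm μ p G) ∧
    (∀ (a : ℝ) (F : Measure X → ℝ),
      LpNorm μ p (fun η => a * F η) = ENNReal.ofReal |a| * LpNorm μ p F) ∧
    (∀ F : Measure X → ℝ, LpNorm μ p F = 0 → ∀ η ∈ MM μ, η ≠ 0 → F η = 0) := by
  have hp0 : 0 < p := zero_lt_one.trans_le hp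
  exact ⟨LpNorm_add_le hp, LpNorm_const_mul hp0,
    fun _ h _ hη hη0 => eq_zero_of_LpNorm_eq_zero hp0 h hη hη0⟩

/-- `𝓛^p(𝓧)` is a vector space and `‖·‖_{𝓛^p}` is a norm on it:
it is subadditive, absolutely homogeneous, and definite (on `𝓧`). -/
theorem stmt9 {X : Type*} [MetricSpace X] [MeasurableSpace X] [BorelSpace X]
    [LocallyCompactSpace X] [TopologicalSpace.SeparableSpace X]
    (μ : Measure X) [μ.Regular]
    (hμ : ∀ (x : X) (r : ℝ), 0 < r → 0 < μ (Metric.ball x r) ∧ μ (Metric.ball x r) < ⊤)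
    (p : ℝ) (hp : 1 ≤ p) :
    (∀ F G : Measure X → ℝ,
      LpNorm μ p (fun η => F η + G η) ≤ LpNorm μ p F + LpNorm μ p G) ∧
    (∀ (a : ℝ) (F : Measure X → ℝ),
      LpNorm μ p (fun η => a * F η) = ENNReal.ofReal |a| * LpNorm μ p F) ∧
    (∀ F : Measure X → ℝ, LpNorm μ p F = 0 → ∀ η ∈ MM μ, η ≠ 0 → F η = 0) :=
  stmt9_general μ p hp
end

section
/- Lattice property of regularized upper gradients: for F,G : 𝓧 → ℝ, \breve{r}_{F∨G} ≤ \breve{r}_F ∨ \breve{r}_G and \breve{r}_{F∧G} ≤ \breve{r}_F ∨ \breve{r}_G pointwise, where F∨G and F∧G denote pointwise max and min. -/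
open MeasureTheory Set Filter
open scoped ENNReal Classical

variable {X : Type*} [MetricSpace X] [MeasurableSpace X]

private lemma inf_sup_aux (a b c : ℝ → ℝ≥0∞)
    (ha : ∀ ⦃ε δ : ℝ⦄, 0 < ε → ε ≤ δ → a ε ≤ a δ)
    (hb : ∀ ⦃ε δ : ℝ⦄, 0 < ε → ε ≤ δ → b ε ≤ b δ)
    (hc : ∀ ε : ℝ, 0 < ε → c ε ≤ a ε ⊔ b ε) :
    (⨅ (ε : ℝ) (_ : 0 < ε), c ε) ≤
      (⨅ (ε : ℝ) (_ : 0 < ε), a ε) ⊔ (⨅ (ε : ℝ) (_ : 0 < ε), b ε) := by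
  refine le_of_forall_gt_imp_ge_of_dense fun d hd => ?_
  have hA : (⨅ (ε : ℝ) (_ : 0 < ε), a ε) < d := lt_of_le_of_lt le_sup_left hd
  have hB : (⨅ (ε : ℝ) (_ : 0 < ε), b ε) < d := lt_of_le_of_lt le_sup_right hd
  simp only [iInf_lt_iff] at hA hB
  obtain ⟨ε₁, h₁, ha₁⟩ := hA
  obtain ⟨ε₂, h₂, hb₂⟩ := hB
  have hε : 0 < min ε₁ ε₂ := lt_min h₁ h₂
  calc (⨅ (ε : ℝ) (_ : 0 < ε), c ε) ≤ c (min ε₁ ε₂) := iInf₂_le _ hε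
    _ ≤ a (min ε₁ ε₂) ⊔ b (min ε₁ ε₂) := hc _ hε
    _ ≤ a ε₁ ⊔ b ε₂ := sup_le_sup (ha hε (min_le_left _ _)) (hb hε (min_le_right _ _))
    _ ≤ d := sup_le ha₁.le hb₂.le

private lemma rGradE_mono {X : Type*} [MetricSpace X] [MeasurableSpace X]
    (h : ℝ → ℝ) (μ : Measure X) (F : Measure X → ℝ) (η : Measure X)
    ⦃ε δ : ℝ⦄ (_ : 0 < ε) (hεδ : ε ≤ δ) :
    rGradE h μ F ε η ≤ rGradE h μ F δ η := by
  refine sSup_le_sSup ?_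
  rintro r ⟨b, γ, s, hγ, hγ0, hs0, hsε, hsb, rfl⟩
  exact ⟨b, γ, s, hγ, hγ0, hs0, hsε.trans_le hεδ, hsb, rfl⟩

private lemma rGradE_dom_le {X : Type*} [MetricSpace X] [MeasurableSpace X]
    (h : ℝ → ℝ) (μ : Measure X) (F G K : Measure X → ℝ)
    (hK : ∀ ρ σ, |K ρ - K σ| ≤ max |F ρ - F σ| |G ρ - G σ|)
    (ε : ℝ) (η : Measure X) :
    rGradE h μ K ε η ≤ rGradE h μ F ε η ⊔ rGradE h μ G ε η := by
  refine sSup_le ?_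
  rintro r ⟨b, γ, s, hγ, hγ0, hs0, hsε, hsb, rfl⟩
  have hdiv : |K (γ s) - K η| / s ≤ max (|F (γ s) - F η| / s) (|G (γ s) - G η| / s) := by
    rw [max_div_div_right hs0.le]
    exact div_le_div_of_nonneg_right (hK _ _) hs0.le
  have hF : ENNReal.ofReal (|F (γ s) - F η| / s) ≤ rGradE h μ F ε η :=
    le_sSup ⟨b, γ, s, hγ, hγ0, hs0, hsε, hsb, rfl⟩
  have hG : ENNReal.ofReal (|G (γ s) - G η| / s) ≤ rGradE h μ G ε η :=
    le_sSup ⟨b, γ, s, hγ, hγ0, hs0, hsε, hsb, rfl⟩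
  calc ENNReal.ofReal (|K (γ s) - K η| / s)
      ≤ ENNReal.ofReal (max (|F (γ s) - F η| / s) (|G (γ s) - G η| / s)) :=
        ENNReal.ofReal_le_ofReal hdiv
    _ = ENNReal.ofReal (|F (γ s) - F η| / s) ⊔ ENNReal.ofReal (|G (γ s) - G η| / s) :=
        (Monotone.map_max fun _ _ hx => ENNReal.ofReal_le_ofReal hx)
    _ ≤ rGradE h μ F ε η ⊔ rGradE h μ G ε η := sup_le_sup hF hG

private lemma rGrad_dom_le {X : Type*} [MetricSpace X] [MeasurableSpace X]
    (h : ℝ → ℝ) (μ : Measure X) (F G K : Measure X → ℝ)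
    (hK : ∀ ρ σ, |K ρ - K σ| ≤ max |F ρ - F σ| |G ρ - G σ|)
    (η : Measure X) :
    rGrad h μ K η ≤ rGrad h μ F η ⊔ rGrad h μ G η :=
  inf_sup_aux _ _ _ (fun _ _ hε hεδ => rGradE_mono h μ F η hε hεδ)
    (fun _ _ hε hεδ => rGradE_mono h μ G η hε hεδ)
    (fun ε _ => rGradE_dom_le h μ F G K hK ε η)

private lemma breveG_mono {X : Type*} [MetricSpace X] [MeasurableSpace X]
    (h : ℝ → ℝ) (μ : Measure X) (g₁ g₂ : Measure X → ℝ≥0∞)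
    (hg : ∀ ρ, g₁ ρ ≤ g₂ ρ) (η : Measure X) :
    breveG h μ g₁ η ≤ breveG h μ g₂ η := by
  refine iInf_mono fun s => iInf_mono fun hs => sSup_le ?_
  rintro r ⟨b, γ, t, hγ, hγ0, ht0, hts, htb, rfl⟩
  exact (hg (γ t)).trans (le_sSup ⟨b, γ, t, hγ, hγ0, ht0, hts, htb, rfl⟩)

private lemma breveG_sup_le {X : Type*} [MetricSpace X] [MeasurableSpace X]
    (h : ℝ → ℝ) (μ : Measure X) (g₁ g₂ : Measure X → ℝ≥0∞) (η : Measure X) :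
    breveG h μ (fun ρ => g₁ ρ ⊔ g₂ ρ) η ≤ breveG h μ g₁ η ⊔ breveG h μ g₂ η := by
  refine inf_sup_aux _ _ _ ?_ ?_ ?_
  · intro ε δ hε hεδ
    refine sSup_le_sSup ?_
    rintro r ⟨b, γ, t, hγ, hγ0, ht0, hts, htb, rfl⟩
    exact ⟨b, γ, t, hγ, hγ0, ht0, hts.trans_le hεδ, htb, rfl⟩
  · intro ε δ hε hεδ
    refine sSup_le_sSup ?_
    rintro r ⟨b, γ, t, hγ, hγ0, ht0, hts, htb, rfl⟩
    exact ⟨b, γ, t, hγ, hγ0, ht0, hts.trans_le hεδ, htb, rfl⟩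
  · intro s hs
    refine sSup_le ?_
    rintro r ⟨b, γ, t, hγ, hγ0, ht0, hts, htb, rfl⟩
    exact sup_le_sup (le_sSup ⟨b, γ, t, hγ, hγ0, ht0, hts, htb, rfl⟩)
      (le_sSup ⟨b, γ, t, hγ, hγ0, ht0, hts, htb, rfl⟩)

/-- Lattice property of regularized upper gradients:
`\breve{r}_{F∨G} ≤ \breve{r}_F ∨ \breve{r}_G` and
`\breve{r}_{F∧G} ≤ \breve{r}_F ∨ \breve{r}_G` pointwise on `𝓧`. -/
theorem stmt17 {X : Type*} [MetricSpace X] [MeasurableSpace X] [BorelSpace X]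
    [LocallyCompactSpace X] [TopologicalSpace.SeparableSpace X]
    (μ : Measure X) [μ.Regular]
    (hμ : ∀ (x : X) (r : ℝ), 0 < r → 0 < μ (Metric.ball x r) ∧ μ (Metric.ball x r) < ⊤)
    (h : ℝ → ℝ) (hh : IsGauge h)
    (F G : Measure X → ℝ) (η : Measure X) (hη : η ∈ MM μ) (hη0 : η ≠ 0) :
    breveG h μ (rGrad h μ (fun ρ => max (F ρ) (G ρ))) η ≤
      max (breveG h μ (rGrad h μ F) η) (breveG h μ (rGrad h μ G) η) ∧
    breveG h μ (rGrad h μ (fun ρ => min (F ρ) (G ρ))) η ≤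
      max (breveG h μ (rGrad h μ F) η) (breveG h μ (rGrad h μ G) η) := by
  constructor
  · calc breveG h μ (rGrad h μ (fun ρ => max (F ρ) (G ρ))) η
        ≤ breveG h μ (fun ρ => rGrad h μ F ρ ⊔ rGrad h μ G ρ) η :=
          breveG_mono h μ _ _
            (fun ρ => rGrad_dom_le h μ F G _ (fun ρ σ => abs_max_sub_max_le_max _ _ _ _) ρ) η
      _ ≤ _ := breveG_sup_le h μ _ _ η
  · calc breveG h μ (rGrad h μ (fun ρ => min (F ρ) (G ρ))) η
        ≤ breveG h μ (fun ρ => rGrad h μ F ρ ⊔ rGrad h μ G ρ) η :=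
          breveG_mono h μ _ _
            (fun ρ => rGrad_dom_le h μ F G _ (fun ρ σ => abs_min_sub_min_le_max _ _ _ _) ρ) η
      _ ≤ _ := breveG_sup_le h μ _ _ η
end
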